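/- arXiv:1301.3264 — 2 statements merged into one kernel-verified Lean document; each statement's English description precedes it below -/
import Mathlib

section
/- For p, q > 1, the generalized arcsine function arcsin_{p,q}(x) = ∫_0^x (1-t^q)^(-1/p) dt is geometrically convex on (0,1): for all x, y ∈ (0,1) and λ ∈ [0,1], arcsin_{p,q}(x^λ y^(1-λ)) ≤ arcsin_{p,q}(x)^λ · arcsin_{p,q}(y)^(1-λ). -/
open Real Set intervalIntegral MeasureTheory

/-!
Substituting `t = s x` gives `∫₀ˣ g = x ∫₀¹ g(s x) ds`, and `s · x^λ y^(1-λ) = (s x)^λ (s y)^(1-λ)`.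
So if the integrand `g` is geometrically convex, the bound holds pointwise under the integral, and
Hölder's inequality with exponents `1/λ, 1/(1-λ)` splits `∫₀¹ g(s x)^λ g(s y)^(1-λ) ds`.
The integrand `(1 - t^q)^(-1/p)` is geometrically convex because
`(1 - u)^λ (1 - v)^(1-λ) ≤ 1 - u^λ v^(1-λ)` (two weighted AM-GM inequalities) and `-1/p ≤ 0`.
-/

theorem MeasureTheory.integral_rpow_mul_rpow_le {α : Type*} [MeasurableSpace α] {μ : Measure α}
    {f g : α → ℝ} (hf₀ : 0 ≤ᵐ[μ] f) (hg₀ : 0 ≤ᵐ[μ] g) (hf : Integrable f μ) (hg : Integrable g μ)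
    {a b : ℝ} (ha : 0 ≤ a) (hb : 0 ≤ b) (hab : a + b = 1) :
    ∫ x, f x ^ a * g x ^ b ∂μ ≤ (∫ x, f x ∂μ) ^ a * (∫ x, g x ∂μ) ^ b := by
  have hfg₀ : 0 ≤ᵐ[μ] fun x => f x ^ a * g x ^ b := by
    filter_upwards [hf₀, hg₀] with x hfx hgx
    exact mul_nonneg (rpow_nonneg hfx a) (rpow_nonneg hgx b)
  have hofReal : ∀ᵐ x ∂μ, ENNReal.ofReal (f x ^ a * g x ^ b)
      = ENNReal.ofReal (f x) ^ a * ENNReal.ofReal (g x) ^ b := by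
    filter_upwards [hf₀, hg₀] with x hfx hgx
    rw [ENNReal.ofReal_mul (rpow_nonneg hfx a), ENNReal.ofReal_rpow_of_nonneg hfx ha,
      ENNReal.ofReal_rpow_of_nonneg hgx hb]
  rw [integral_eq_lintegral_of_nonneg_ae hfg₀
      ((hf.1.aemeasurable.pow_const a).mul (hg.1.aemeasurable.pow_const b)).aestronglyMeasurable,
    integral_eq_lintegral_of_nonneg_ae hf₀ hf.1, integral_eq_lintegral_of_nonneg_ae hg₀ hg.1,
    lintegral_congr_ae hofReal, ENNReal.toReal_rpow, ENNReal.toReal_rpow, ← ENNReal.toReal_mul]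
  refine ENNReal.toReal_mono ?_ (ENNReal.lintegral_mul_norm_pow_le
    hf.1.aemeasurable.ennreal_ofReal hg.1.aemeasurable.ennreal_ofReal ha hb hab)
  exact ENNReal.mul_ne_top (ENNReal.rpow_ne_top_of_nonneg ha hf.lintegral_lt_top.ne)
    (ENNReal.rpow_ne_top_of_nonneg hb hg.lintegral_lt_top.ne)

namespace Real

lemma rpow_mul_rpow_rpow {a b : ℝ} (ha : 0 ≤ a) (hb : 0 ≤ b) (l m r : ℝ) :
    (a ^ l * b ^ m) ^ r = (a ^ r) ^ l * (b ^ r) ^ m := by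
  rw [mul_rpow (rpow_nonneg ha _) (rpow_nonneg hb _), ← rpow_mul ha, ← rpow_mul ha,
    ← rpow_mul hb, ← rpow_mul hb, mul_comm l, mul_comm m]

lemma mul_rpow_mul_rpow_one_sub {s x y : ℝ} (hs : 0 ≤ s) (hx : 0 ≤ x) (hy : 0 ≤ y) (l : ℝ) :
    s * (x ^ l * y ^ (1 - l)) = (s * x) ^ l * (s * y) ^ (1 - l) := by
  have hsplit : s = s ^ l * s ^ (1 - l) := by
    rw [← rpow_add' hs (by norm_num), add_sub_cancel, rpow_one]
  rw [mul_rpow hs hx, mul_rpow hs hy]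
  nth_rw 1 [hsplit]
  ring

lemma rpow_mul_rpow_one_sub_lt {x y c l : ℝ} (hx : 0 ≤ x) (hy : 0 ≤ y) (hxc : x < c) (hyc : y < c)
    (hl : l ∈ Icc (0:ℝ) 1) : x ^ l * y ^ (1 - l) < c := by
  have hl' : 0 ≤ 1 - l := sub_nonneg.2 hl.2
  have hmean := geom_mean_le_arith_mean2_weighted hl.1 hl' hx hy (by ring)
  have hx' := mul_le_mul_of_nonneg_left (le_max_left x y) hl.1
  have hy' := mul_le_mul_of_nonneg_left (le_max_right x y) hl'
  linarith [max_lt hxc hyc]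

lemma rpow_mul_rpow_one_sub_add_le_one {u v l : ℝ} (hu : u ∈ Icc (0:ℝ) 1) (hv : v ∈ Icc (0:ℝ) 1)
    (hl : l ∈ Icc (0:ℝ) 1) :
    u ^ l * v ^ (1 - l) + (1 - u) ^ l * (1 - v) ^ (1 - l) ≤ 1 := by
  have hl' : 0 ≤ 1 - l := sub_nonneg.2 hl.2
  have h₁ := geom_mean_le_arith_mean2_weighted hl.1 hl' hu.1 hv.1 (by ring)
  have h₂ := geom_mean_le_arith_mean2_weighted hl.1 hl' (sub_nonneg.2 hu.2) (sub_nonneg.2 hv.2)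
    (by ring)
  linarith

lemma one_sub_rpow_pos {t q : ℝ} (ht : t ∈ Ico (0:ℝ) 1) (hq : 0 < q) : 0 < 1 - t ^ q :=
  sub_pos.2 (rpow_lt_one ht.1 ht.2 hq)

end Real

theorem intervalIntegral.integral_zero_eq_mul_setIntegral_Ioc (g : ℝ → ℝ) {w : ℝ} (hw : w ≠ 0) :
    ∫ t in (0:ℝ)..w, g t = w * ∫ s in Ioc 0 1, g (s * w) := by
  rw [← integral_of_le zero_le_one, integral_comp_mul_right g hw, smul_eq_mul, zero_mul,
    one_mul, mul_inv_cancel_left₀ hw]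

def GeomConvexOn (s : Set ℝ) (f : ℝ → ℝ) : Prop :=
  ∀ x ∈ s, ∀ y ∈ s, ∀ l ∈ Icc (0:ℝ) 1, f (x ^ l * y ^ (1 - l)) ≤ f x ^ l * f y ^ (1 - l)

theorem geomConvexOn_one_sub_rpow_rpow {q r : ℝ} (hq : 0 < q) (hr : r ≤ 0) :
    GeomConvexOn (Ico 0 1) (fun t => (1 - t ^ q) ^ r) := by
  intro x hx y hy l hl
  have hmem : ∀ t ∈ Ico (0:ℝ) 1, t ^ q ∈ Icc (0:ℝ) 1 := fun t ht =>
    ⟨rpow_nonneg ht.1 q, rpow_le_one ht.1 ht.2.le hq.le⟩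
  have hu := one_sub_rpow_pos hx hq
  have hv := one_sub_rpow_pos hy hq
  dsimp only
  rw [rpow_mul_rpow_rpow hx.1 hy.1, ← rpow_mul_rpow_rpow hu.le hv.le]
  refine rpow_le_rpow_of_nonpos (by positivity) ?_ hr
  linarith [rpow_mul_rpow_one_sub_add_le_one (hmem x hx) (hmem y hy) hl]

theorem GeomConvexOn.intervalIntegral_zero {g : ℝ → ℝ} {c : ℝ} (hg : GeomConvexOn (Ico 0 c) g)
    (hcont : ContinuousOn g (Ico 0 c)) (hg₀ : ∀ t ∈ Ico 0 c, 0 ≤ g t) :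
    GeomConvexOn (Ioo 0 c) fun x => ∫ t in (0:ℝ)..x, g t := by
  intro x hx y hy l hl
  have hl' : 0 ≤ 1 - l := sub_nonneg.2 hl.2
  have hmaps : ∀ w ∈ Ioo 0 c, MapsTo (fun s => s * w) (Icc 0 1) (Ico 0 c) := fun w hw s hs =>
    ⟨mul_nonneg hs.1 hw.1.le, (mul_le_of_le_one_left hw.1.le hs.2).trans_lt hw.2⟩
  have hcontw : ∀ w ∈ Ioo 0 c, ContinuousOn (fun s => g (s * w)) (Icc 0 1) := fun w hw =>
    hcont.comp (continuousOn_id.mul continuousOn_const) (hmaps w hw)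
  have hint : ∀ w ∈ Ioo 0 c, IntegrableOn (fun s => g (s * w)) (Ioc 0 1) := fun w hw =>
    (hcontw w hw).integrableOn_Icc.mono_set Ioc_subset_Icc_self
  have hnonneg : ∀ w ∈ Ioo 0 c, 0 ≤ᵐ[volume.restrict (Ioc 0 1)] fun s => g (s * w) := by
    intro w hw
    filter_upwards [ae_restrict_mem measurableSet_Ioc] with s hs
    exact hg₀ _ (hmaps w hw (Ioc_subset_Icc_self hs))
  set z := x ^ l * y ^ (1 - l)
  have hz : z ∈ Ioo 0 c :=
    ⟨mul_pos (rpow_pos_of_pos hx.1 _) (rpow_pos_of_pos hy.1 _),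
      rpow_mul_rpow_one_sub_lt hx.1.le hy.1.le hx.2 hy.2 hl⟩
  have hpointwise : ∀ s ∈ Ioc (0:ℝ) 1, g (s * z) ≤ g (s * x) ^ l * g (s * y) ^ (1 - l) := by
    intro s hs
    have hs' : s ∈ Icc (0:ℝ) 1 := Ioc_subset_Icc_self hs
    have hsz : s * z = (s * x) ^ l * (s * y) ^ (1 - l) :=
      mul_rpow_mul_rpow_one_sub hs.1.le hx.1.le hy.1.le l
    rw [hsz]
    exact hg _ (hmaps x hx hs') _ (hmaps y hy hs') l hl
  have hint_mean : IntegrableOn (fun s => g (s * x) ^ l * g (s * y) ^ (1 - l)) (Ioc 0 1) :=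
    (((hcontw x hx).rpow_const fun _ _ => Or.inr hl.1).mul
      ((hcontw y hy).rpow_const fun _ _ => Or.inr hl')).integrableOn_Icc.mono_set
      Ioc_subset_Icc_self
  have hI₀ : ∀ w ∈ Ioo 0 c, 0 ≤ ∫ s in Ioc 0 1, g (s * w) := fun w hw =>
    integral_nonneg_of_ae (hnonneg w hw)
  calc ∫ t in (0:ℝ)..z, g t = z * ∫ s in Ioc 0 1, g (s * z) :=
        integral_zero_eq_mul_setIntegral_Ioc g hz.1.ne'
    _ ≤ z * ((∫ s in Ioc 0 1, g (s * x)) ^ l * (∫ s in Ioc 0 1, g (s * y)) ^ (1 - l)) := by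
      refine mul_le_mul_of_nonneg_left ?_ hz.1.le
      exact (setIntegral_mono_on (hint z hz) hint_mean measurableSet_Ioc hpointwise).trans
        (integral_rpow_mul_rpow_le (hnonneg x hx) (hnonneg y hy) (hint x hx) (hint y hy) hl.1 hl'
          (by ring))
    _ = (x * ∫ s in Ioc 0 1, g (s * x)) ^ l * (y * ∫ s in Ioc 0 1, g (s * y)) ^ (1 - l) := by
      rw [mul_rpow hx.1.le (hI₀ x hx), mul_rpow hy.1.le (hI₀ y hy)]
      ring
    _ = (∫ t in (0:ℝ)..x, g t) ^ l * (∫ t in (0:ℝ)..y, g t) ^ (1 - l) := by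
      rw [integral_zero_eq_mul_setIntegral_Ioc g hx.1.ne',
        integral_zero_eq_mul_setIntegral_Ioc g hy.1.ne']

theorem arcsin_pq_geom_convex (p q : ℝ) (hp : 1 < p) (hq : 1 < q) :
    ∀ x ∈ Set.Ioo (0:ℝ) 1, ∀ y ∈ Set.Ioo (0:ℝ) 1, ∀ l ∈ Set.Icc (0:ℝ) 1,
      (∫ t in (0:ℝ)..(x ^ l * y ^ (1 - l)), (1 - t ^ q) ^ (-1/p))
        ≤ (∫ t in (0:ℝ)..x, (1 - t ^ q) ^ (-1/p)) ^ l
            * (∫ t in (0:ℝ)..y, (1 - t ^ q) ^ (-1/p)) ^ (1 - l) := by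
  have hq₀ : 0 < q := by linarith
  have hr : -1 / p ≤ 0 := div_nonpos_of_nonpos_of_nonneg (by norm_num) (by linarith)
  have hcont : ContinuousOn (fun t : ℝ => (1 - t ^ q) ^ (-1 / p)) (Ico 0 1) :=
    (continuousOn_const.sub (continuousOn_id.rpow_const fun _ _ => Or.inr hq₀.le)).rpow_const
      fun t ht => Or.inl (one_sub_rpow_pos ht hq₀).ne'
  exact (geomConvexOn_one_sub_rpow_rpow hq₀ hr).intervalIntegral_zero hcont
    fun t ht => (rpow_pos_of_pos (one_sub_rpow_pos ht hq₀) _).le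
end

section
/- For p, q > 1 and r, s ∈ (0,1), sinh_{p,q}(√(rs)) ≤ √(sinh_{p,q}(r) · sinh_{p,q}(s)). -/
/-!
Write `F = arcsinh_{p,q}` and `f t = (1 + t ^ q) ^ (-1/p)`. For `μ ≥ 1` the ratio `f (μ t) / f t`
is nonincreasing in `t`, hence so is `F (μ x) / F x = μ ∫₀ˣ f (μ t) dt / ∫₀ˣ f t dt`. With
`μ = √(c / b)` this compares the ratios at `b` and at `√(b c)`, giving `F b * F c ≤ F (√(b c)) ^ 2`.
Since `F` is strictly increasing and `S` inverts it, the claim follows once `r`, `s` and `√(r s)`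
are values of `F`: this holds because `∫₀^∞ f ≥ ∫₀^∞ dt / (1 + t ^ q) ≥ 1`, the last bound
coming from pairing `t` with `1 / t`.
-/

open Real Set intervalIntegral

theorem integral_mul_integral_le_of_ratio_antitone {φ ψ : ℝ → ℝ} {a x y : ℝ}
    (hax : a ≤ x) (hxy : x ≤ y)
    (hφ : IntervalIntegrable φ MeasureTheory.volume a y)
    (hψ : IntervalIntegrable ψ MeasureTheory.volume a y)
    (h : ∀ t s, a ≤ t → t ≤ s → s ≤ y → φ s * ψ t ≤ φ t * ψ s) :
    (∫ t in a..y, φ t) * (∫ t in a..x, ψ t) ≤ (∫ t in a..x, φ t) * (∫ t in a..y, ψ t) := by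
  have hsub₁ : uIcc a x ⊆ uIcc a y := uIcc_subset_uIcc_left (mem_uIcc_of_le hax hxy)
  have hsub₂ : uIcc x y ⊆ uIcc a y := uIcc_subset_uIcc_right (mem_uIcc_of_le hax hxy)
  have hφ₁ := hφ.mono_set hsub₁
  have hφ₂ := hφ.mono_set hsub₂
  have hψ₁ := hψ.mono_set hsub₁
  have hψ₂ := hψ.mono_set hsub₂
  have hpointwise : ∀ t ∈ Icc a x,
      (∫ s in x..y, φ s) * ψ t ≤ φ t * ∫ s in x..y, ψ s := by
    intro t ht
    rw [← integral_mul_const, ← integral_const_mul]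
    exact integral_mono_on hxy (hφ₂.mul_const _) (hψ₂.const_mul _)
      fun s hs => h t s ht.1 (ht.2.trans hs.1) hs.2
  have hcross : (∫ s in x..y, φ s) * (∫ t in a..x, ψ t) ≤
      (∫ t in a..x, φ t) * ∫ s in x..y, ψ s :=
    calc (∫ s in x..y, φ s) * (∫ t in a..x, ψ t)
        = ∫ t in a..x, (∫ s in x..y, φ s) * ψ t := (integral_const_mul _ _).symm
      _ ≤ ∫ t in a..x, φ t * ∫ s in x..y, ψ s :=
          integral_mono_on hax (hψ₁.const_mul _) (hφ₁.mul_const _) hpointwise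
      _ = (∫ t in a..x, φ t) * ∫ s in x..y, ψ s := integral_mul_const _ _
  rw [← integral_add_adjacent_intervals hφ₁ hφ₂, ← integral_add_adjacent_intervals hψ₁ hψ₂]
  linarith

theorem integral_eq_integral_comp_inv_div_sq {g : ℝ → ℝ} {a b : ℝ} (ha : 0 < a) (hab : a ≤ b)
    (hg : ContinuousOn g (Icc a b)) :
    ∫ t in a..b, g t = ∫ u in b⁻¹..a⁻¹, g u⁻¹ / u ^ 2 := by
  have hb : 0 < b := ha.trans_le hab
  have hI : uIcc b⁻¹ a⁻¹ = Icc b⁻¹ a⁻¹ := uIcc_of_le (inv_anti₀ ha hab)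
  have hpos : ∀ u ∈ Icc b⁻¹ a⁻¹, 0 < u := fun u hu => (inv_pos.2 hb).trans_le hu.1
  have hmaps : (fun u : ℝ => u⁻¹) '' uIcc b⁻¹ a⁻¹ ⊆ Icc a b := by
    rintro _ ⟨u, hu, rfl⟩
    rw [hI] at hu
    exact ⟨(le_inv_comm₀ ha (hpos u hu)).2 hu.2, (inv_le_comm₀ (hpos u hu) hb).2 hu.1⟩
  have := integral_comp_mul_deriv' (g := g) (fun u hu => hasDerivAt_inv (hpos u (hI ▸ hu)).ne')
    ((continuousOn_pow 2).inv₀ fun u hu => pow_ne_zero 2 (hpos u (hI ▸ hu)).ne').neg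
    (hg.mono hmaps)
  simp only [inv_inv, Function.comp_def] at this
  rw [integral_symm, ← this, ← integral_neg]
  congr 1 with u
  ring

section

variable {p q : ℝ}

theorem one_add_rpow_pos {t : ℝ} (ht : 0 ≤ t) : 0 < 1 + t ^ q :=
  add_pos_of_pos_of_nonneg one_pos (rpow_nonneg ht q)

theorem continuousOn_one_add_rpow_rpow (hq : 0 ≤ q) (r : ℝ) :
    ContinuousOn (fun t : ℝ => (1 + t ^ q) ^ r) (Ici 0) :=
  ((continuous_const.add (continuous_rpow_const hq)).continuousOn).rpow_const
    fun _ ht => Or.inl (one_add_rpow_pos ht).ne'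

theorem intervalIntegrable_one_add_rpow_rpow (hq : 0 ≤ q) (r : ℝ) {a b : ℝ}
    (ha : 0 ≤ a) (hb : 0 ≤ b) :
    IntervalIntegrable (fun t : ℝ => (1 + t ^ q) ^ r) MeasureTheory.volume a b :=
  ((continuousOn_one_add_rpow_rpow hq r).mono
    fun _ ht => (le_min ha hb).trans ht.1).intervalIntegrable

theorem one_le_one_add_rpow_inv_add_div_sq {u : ℝ} (hu₀ : 0 < u) (hu₁ : u ≤ 1) :
    1 ≤ (1 + u ^ q) ^ (-1 : ℝ) + (1 + u⁻¹ ^ q) ^ (-1 : ℝ) / u ^ 2 := by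
  have hX : 0 < u ^ q := rpow_pos_of_pos hu₀ q
  calc (1 : ℝ) = (1 + u ^ q)⁻¹ + u ^ q / (1 + u ^ q) := by field_simp
    _ ≤ (1 + u ^ q)⁻¹ + u ^ q / (1 + u ^ q) / u ^ 2 :=
        (add_le_add_iff_left _).2 <| le_div_self (div_nonneg hX.le (one_add_rpow_pos hu₀.le).le)
          (pow_pos hu₀ 2) (pow_le_one₀ hu₀.le hu₁)
    _ = (1 + u ^ q) ^ (-1 : ℝ) + (1 + u⁻¹ ^ q) ^ (-1 : ℝ) / u ^ 2 := by
        rw [rpow_neg_one, rpow_neg_one, inv_rpow hu₀.le]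
        field_simp
        ring

theorem one_sub_inv_le_integral_one_add_rpow_neg_one (hq : 0 ≤ q) {N : ℝ} (hN : 1 ≤ N) :
    1 - N⁻¹ ≤ ∫ t in (0:ℝ)..N, (1 + t ^ q) ^ (-1 : ℝ) := by
  set g : ℝ → ℝ := fun t => (1 + t ^ q) ^ (-1 : ℝ)
  have hN₀ : 0 < N := one_pos.trans_le hN
  have hN₁ : N⁻¹ ≤ 1 := inv_le_one_of_one_le₀ hN
  have hNpos : 0 < N⁻¹ := inv_pos.2 hN₀
  have hg : ∀ {a b : ℝ}, 0 ≤ a → 0 ≤ b → IntervalIntegrable g MeasureTheory.volume a b :=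
    fun ha hb => intervalIntegrable_one_add_rpow_rpow hq (-1) ha hb
  have hflip : ContinuousOn (fun u => g u⁻¹ / u ^ 2) (Icc N⁻¹ 1) := by
    have hpos : ∀ u ∈ Icc N⁻¹ 1, 0 < u := fun u hu => hNpos.trans_le hu.1
    refine ((continuousOn_one_add_rpow_rpow hq (-1)).comp
      (continuousOn_inv₀.mono fun u hu => (hpos u hu).ne') fun u hu => ?_).div
      (continuousOn_pow 2) fun u hu' => pow_ne_zero 2 (hpos u hu').ne'
    exact (inv_pos.2 (hpos u hu)).le
  calc 1 - N⁻¹ = ∫ _ in N⁻¹..1, (1 : ℝ) := by simp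
    _ ≤ ∫ u in N⁻¹..1, (g u + g u⁻¹ / u ^ 2) :=
        integral_mono_on hN₁ intervalIntegrable_const
          ((hg hNpos.le zero_le_one).add (hflip.intervalIntegrable_of_Icc hN₁))
          fun u hu => one_le_one_add_rpow_inv_add_div_sq (hNpos.trans_le hu.1) hu.2
    _ = (∫ u in N⁻¹..1, g u) + ∫ t in (1:ℝ)..N, g t := by
        rw [integral_add (hg hNpos.le zero_le_one) (hflip.intervalIntegrable_of_Icc hN₁),
          integral_eq_integral_comp_inv_div_sq one_pos hN
            ((continuousOn_one_add_rpow_rpow hq (-1)).mono fun t ht => zero_le_one.trans ht.1),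
          inv_one]
    _ = ∫ t in N⁻¹..N, g t :=
        integral_add_adjacent_intervals (hg hNpos.le zero_le_one) (hg zero_le_one hN₀.le)
    _ ≤ ∫ t in (0:ℝ)..N, g t := by
        rw [← integral_add_adjacent_intervals (hg le_rfl hNpos.le) (hg hNpos.le hN₀.le)]
        exact le_add_of_nonneg_left (integral_nonneg hNpos.le
          fun t ht => (rpow_pos_of_pos (one_add_rpow_pos ht.1) _).le)

theorem one_add_rpow_rpow_mul_le {r μ t s : ℝ} (hq : 0 ≤ q) (hr : r ≤ 0) (hμ : 1 ≤ μ)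
    (ht : 0 ≤ t) (hts : t ≤ s) :
    (1 + (μ * s) ^ q) ^ r * (1 + t ^ q) ^ r ≤ (1 + (μ * t) ^ q) ^ r * (1 + s ^ q) ^ r := by
  have hs : 0 ≤ s := ht.trans hts
  have hμ₀ : 0 ≤ μ := zero_le_one.trans hμ
  have hbase : (1 + (μ * t) ^ q) * (1 + s ^ q) ≤ (1 + (μ * s) ^ q) * (1 + t ^ q) := by
    rw [mul_rpow hμ₀ ht, mul_rpow hμ₀ hs]
    have hM : 1 ≤ μ ^ q := one_le_rpow hμ hq
    have hTS : t ^ q ≤ s ^ q := rpow_le_rpow ht hts hq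
    nlinarith [rpow_nonneg ht q]
  rw [← mul_rpow (one_add_rpow_pos (mul_nonneg hμ₀ hs)).le (one_add_rpow_pos ht).le,
    ← mul_rpow (one_add_rpow_pos (mul_nonneg hμ₀ ht)).le (one_add_rpow_pos hs).le]
  exact rpow_le_rpow_of_nonpos
    (mul_pos (one_add_rpow_pos (mul_nonneg hμ₀ ht)) (one_add_rpow_pos hs)) hbase hr

noncomputable def arcsinhPQ (p q x : ℝ) : ℝ := ∫ t in (0:ℝ)..x, (1 + t ^ q) ^ (-1/p)

theorem arcsinhPQ_mul_mul_le {μ x y : ℝ} (hp : 0 ≤ p) (hq : 0 ≤ q) (hμ : 1 ≤ μ)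
    (hx : 0 ≤ x) (hxy : x ≤ y) :
    arcsinhPQ p q (μ * y) * arcsinhPQ p q x ≤ arcsinhPQ p q (μ * x) * arcsinhPQ p q y := by
  have hμ₀ : 0 ≤ μ := zero_le_one.trans hμ
  have hscale : ∀ z, arcsinhPQ p q (μ * z) = μ * ∫ t in (0:ℝ)..z, (1 + (μ * t) ^ q) ^ (-1/p) :=
    fun z => by
      have := smul_integral_comp_mul_left (fun t : ℝ => (1 + t ^ q) ^ (-1/p)) μ (a := 0) (b := z)
      rw [mul_zero, smul_eq_mul] at this
      exact this.symm
  have hint : IntervalIntegrable (fun t => (1 + (μ * t) ^ q) ^ (-1/p)) MeasureTheory.volume 0 y :=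
    ((continuousOn_one_add_rpow_rpow hq _).comp (continuous_const_mul μ).continuousOn
      fun t ht => mul_nonneg hμ₀ ((le_min le_rfl (hx.trans hxy)).trans ht.1)).intervalIntegrable
  rw [hscale, hscale, mul_assoc, mul_assoc]
  exact mul_le_mul_of_nonneg_left (integral_mul_integral_le_of_ratio_antitone hx hxy hint
    (intervalIntegrable_one_add_rpow_rpow hq _ le_rfl (hx.trans hxy))
    fun t s ht hts _ => one_add_rpow_rpow_mul_le hq
      (div_nonpos_of_nonpos_of_nonneg (by norm_num) hp) hμ ht hts) hμ₀

theorem sqrt_mul_arcsinhPQ_le_arcsinhPQ_sqrt {b c : ℝ} (hp : 0 ≤ p) (hq : 0 ≤ q)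
    (hb : 0 < b) (hc : 0 < c) :
    √(arcsinhPQ p q b * arcsinhPQ p q c) ≤ arcsinhPQ p q √(b * c) := by
  wlog hbc : b ≤ c generalizing b c
  · rw [mul_comm, mul_comm b]
    exact this hc hb (le_of_not_ge hbc)
  set m := √(b * c)
  have hbm : b ≤ m := le_sqrt_of_sq_le (by nlinarith)
  have hFm : 0 ≤ arcsinhPQ p q m := integral_nonneg (hb.le.trans hbm)
    fun t ht => (rpow_pos_of_pos (one_add_rpow_pos ht.1) _).le
  have hμb : m / b * b = m := div_mul_cancel₀ m hb.ne'
  have hμm : m / b * m = c := by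
    rw [div_mul_eq_mul_div, ← sq, sq_sqrt (mul_pos hb hc).le]
    field_simp
  have key := arcsinhPQ_mul_mul_le hp hq ((one_le_div hb).2 hbm) hb.le hbm
  rw [hμb, hμm] at key
  rw [sqrt_le_left hFm, sq, mul_comm]
  exact key

theorem strictMonoOn_arcsinhPQ (hq : 0 ≤ q) : StrictMonoOn (arcsinhPQ p q) (Ici 0) := by
  intro a ha b hb hab
  rw [← sub_pos, arcsinhPQ, arcsinhPQ, integral_interval_sub_left
    (intervalIntegrable_one_add_rpow_rpow hq _ le_rfl hb)
    (intervalIntegrable_one_add_rpow_rpow hq _ le_rfl ha)]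
  exact intervalIntegral_pos_of_pos_on (intervalIntegrable_one_add_rpow_rpow hq _ ha hb)
    (fun t ht => rpow_pos_of_pos (one_add_rpow_pos ((mem_Ici.1 ha).trans ht.1.le)) _) hab

theorem one_sub_inv_le_arcsinhPQ (hp : 1 ≤ p) (hq : 0 ≤ q) {N : ℝ} (hN : 1 ≤ N) :
    1 - N⁻¹ ≤ arcsinhPQ p q N := by
  have hexp : (-1 : ℝ) ≤ -1/p := by
    rw [neg_div, neg_le_neg_iff]
    exact div_le_one_of_le₀ hp (zero_le_one.trans hp)
  refine (one_sub_inv_le_integral_one_add_rpow_neg_one hq hN).trans <|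
    integral_mono_on (zero_le_one.trans hN)
      (intervalIntegrable_one_add_rpow_rpow hq _ le_rfl (zero_le_one.trans hN))
      (intervalIntegrable_one_add_rpow_rpow hq _ le_rfl (zero_le_one.trans hN)) fun t ht => ?_
  exact rpow_le_rpow_of_exponent_le (le_add_of_nonneg_right (rpow_nonneg ht.1 q)) hexp

theorem surjOn_arcsinhPQ (hp : 1 ≤ p) (hq : 0 ≤ q) :
    SurjOn (arcsinhPQ p q) (Ioi 0) (Ioo 0 1) := by
  intro v ⟨hv₀, hv₁⟩
  set N := (1 - v)⁻¹
  have hN : 1 ≤ N := one_le_inv₀ (by linarith) |>.2 (by linarith)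
  have hvN : v ≤ arcsinhPQ p q N := by
    simpa [N] using one_sub_inv_le_arcsinhPQ hp hq hN
  have hcont : ContinuousOn (arcsinhPQ p q) (Icc 0 N) := by
    have := continuousOn_primitive_interval'
      (intervalIntegrable_one_add_rpow_rpow hq (-1/p) le_rfl (zero_le_one.trans hN)) left_mem_uIcc
    rwa [uIcc_of_le (zero_le_one.trans hN)] at this
  obtain ⟨x, hx, hFx⟩ := intermediate_value_Icc (zero_le_one.trans hN) hcont
    ⟨by simpa [arcsinhPQ] using hv₀.le, hvN⟩
  refine ⟨x, lt_of_le_of_ne hx.1 ?_, hFx⟩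
  rintro rfl
  simp [arcsinhPQ] at hFx
  linarith

end

theorem sinh_pq_sqrt_ineq (p q : ℝ) (hp : 1 < p) (hq : 1 < q) (S : ℝ → ℝ)
    (hS : ∀ x ∈ Set.Ici (0:ℝ),
      S (∫ t in (0:ℝ)..x, (1 + t ^ q) ^ (-1/p)) = x) :
    ∀ r ∈ Set.Ioo (0:ℝ) 1, ∀ s ∈ Set.Ioo (0:ℝ) 1,
      S (Real.sqrt (r * s)) ≤ Real.sqrt (S r * S s) := by
  have hq₀ : 0 ≤ q := zero_le_one.trans hq.le
  have hSF : ∀ x, 0 < x → S (arcsinhPQ p q x) = x := fun x hx => hS x (mem_Ici.2 hx.le)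
  intro r hr s hs
  have hrs : √(r * s) ∈ Ioo 0 1 := by
    refine ⟨sqrt_pos.2 (mul_pos hr.1 hs.1), (sqrt_lt' one_pos).2 ?_⟩
    rw [one_pow]
    exact mul_lt_one_of_nonneg_of_lt_one_left hr.1.le hr.2 hs.2.le
  obtain ⟨a, ha, hFa⟩ := surjOn_arcsinhPQ hp.le hq₀ hrs
  obtain ⟨b, hb, rfl⟩ := surjOn_arcsinhPQ hp.le hq₀ hr
  obtain ⟨c, hc, rfl⟩ := surjOn_arcsinhPQ hp.le hq₀ hs
  rw [← hFa, hSF a ha, hSF b hb, hSF c hc, ← (strictMonoOn_arcsinhPQ hq₀).le_iff_le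
    (mem_Ici.2 ha.le) (mem_Ici.2 (sqrt_nonneg _)), hFa]
  exact sqrt_mul_arcsinhPQ_le_arcsinhPQ_sqrt (zero_le_one.trans hp.le) hq₀ hb hc
end
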